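/- arXiv:2503.04712 — 8 statements merged into one kernel-verified Lean document; each statement's English description precedes it below -/
import Mathlib

section
/- Suppose F : E → ℝ is twice continuously differentiable with F(w) ≥ 0 for all w, and F is (L0, L1)-smooth, i.e. ‖∇²F(w)‖_op ≤ L0 + L1·‖∇F(w)‖ for all w, where L0 ≥ 0 and L1 > 0. Then for all w, ‖∇F(w)‖ ≤ L0/(2·L1) + 4·L1·F(w). -/
open Real Set InnerProductSpace

/-!
Let `g = ‖∇F w‖` and walk from `w` a distance `t = 2 / (5 L1)` along the steepest descent
direction `u`. Grönwall's inequality applied to `∇F` along the segment keeps `L0 + L1 ‖∇F‖`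
within a factor `exp (L1 t) = exp (2/5) ≤ 5/3` of its value at `w`, so the second derivative of
`F` along the segment is at most `(5/3) (L0 + L1 g)`. The resulting quadratic upper bound gives
`0 ≤ F (w + t u) ≤ F w - g t + (5/6) (L0 + L1 g) t²`, which rearranges to
`g ≤ L0 / (2 L1) + (15/4) L1 F w`.
-/

theorem le_add_deriv_mul_add_of_second_deriv_le {φ φ' φ'' : ℝ → ℝ} {r M : ℝ} (hr : 0 ≤ r)
    (hφ : ∀ t, HasDerivAt φ (φ' t) t) (hφ' : ∀ t, HasDerivAt φ' (φ'' t) t)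
    (hM : ∀ t ∈ Ico 0 r, φ'' t ≤ M) :
    φ r ≤ φ 0 + φ' 0 * r + M * r ^ 2 / 2 := by
  have hφ'_le : ∀ t ∈ Icc 0 r, φ' t ≤ φ' 0 + M * t := by
    refine image_le_of_deriv_right_le_deriv_boundary
      (fun t _ => (hφ' t).continuousAt.continuousWithinAt)
      (fun t _ => (hφ' t).hasDerivWithinAt) (by simp) (by fun_prop)
      (fun t _ => ((hasDerivAt_id t).const_mul M).const_add (φ' 0) |>.hasDerivWithinAt) ?_
    simpa using hM
  refine image_le_of_deriv_right_le_deriv_boundary (B := fun t => φ 0 + φ' 0 * t + M * t ^ 2 / 2)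
      (fun t _ => (hφ t).continuousAt.continuousWithinAt)
      (fun t _ => (hφ t).hasDerivWithinAt) (by simp) (by fun_prop) (fun t _ => ?_)
      (fun t ht => hφ'_le t (Ico_subset_Icc_self ht)) (right_mem_Icc.2 hr)
  refine HasDerivAt.hasDerivWithinAt ?_
  exact ((((hasDerivAt_id t).const_mul (φ' 0)).const_add (φ 0)).add
    ((hasDerivAt_pow 2 t).const_mul M |>.div_const 2)).congr_deriv (by simp; ring)

theorem add_mul_gronwallBound (δ K ε x : ℝ) :
    ε + K * gronwallBound δ K ε x = (ε + K * δ) * exp (K * x) := by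
  rcases eq_or_ne K 0 with rfl | hK
  · simp
  · rw [gronwallBound_of_K_ne_0 hK]
    field_simp
    ring

theorem exp_two_fifths_le : exp (2 / 5) ≤ 5 / 3 :=
  (exp_bound_div_one_sub_of_interval (by norm_num) (by norm_num)).trans_eq (by norm_num)

theorem ContinuousLinearMap.exists_norm_le_one_apply_eq_neg_norm {E : Type*}
    [NormedAddCommGroup E] [InnerProductSpace ℝ E] [CompleteSpace E] (ℓ : E →L[ℝ] ℝ) :
    ∃ u : E, ‖u‖ ≤ 1 ∧ ℓ u = -‖ℓ‖ := by
  obtain ⟨v, rfl⟩ := (toDual ℝ E).surjective ℓ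
  refine ⟨-‖v‖⁻¹ • v, ?_, ?_⟩
  · rw [norm_smul, norm_neg, norm_inv, norm_norm]
    exact inv_mul_le_one
  · rw [toDual_apply_apply, real_inner_smul_right, real_inner_self_eq_norm_sq,
      (toDual ℝ E).norm_map]
    rcases eq_or_ne ‖v‖ 0 with h | h
    · simp [h]
    · field_simp

section

variable {E G : Type*} [NormedAddCommGroup E] [NormedSpace ℝ E]
  [NormedAddCommGroup G] [NormedSpace ℝ G]

theorem hasDerivAt_comp_add_smul {f : E → G} (hf : Differentiable ℝ f) (w u : E) (t : ℝ) :
    HasDerivAt (fun s : ℝ => f (w + s • u)) (fderiv ℝ f (w + t • u) u) t := by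
  have hline : HasDerivAt (fun s : ℝ => w + s • u) u t := by
    simpa using ((hasDerivAt_id t).smul_const u).const_add w
  exact (hf _).hasFDerivAt.comp_hasDerivAt t hline

theorem norm_add_smul_le_gronwallBound {f : E → G} {L0 L1 : ℝ} (hf : Differentiable ℝ f)
    (hbound : ∀ x, ‖fderiv ℝ f x‖ ≤ L0 + L1 * ‖f x‖) (w : E) {u : E} (hu : ‖u‖ ≤ 1)
    {t : ℝ} (ht : 0 ≤ t) :
    ‖f (w + t • u)‖ ≤ gronwallBound ‖f w‖ L1 L0 t := by
  simpa using norm_le_gronwallBound_of_norm_deriv_right_le (a := 0) (b := t)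
    (fun s _ => (hasDerivAt_comp_add_smul hf w u s).continuousAt.continuousWithinAt)
    (fun s _ => (hasDerivAt_comp_add_smul hf w u s).hasDerivWithinAt) (by simp)
    (fun s _ => ((fderiv ℝ f _).le_opNorm_of_le hu).trans <| by linarith [hbound (w + s • u)])
    t (right_mem_Icc.2 ht)

theorem apply_add_smul_le_of_norm_fderiv_fderiv_le {F : E → ℝ} {L0 L1 : ℝ} (hF : ContDiff ℝ 2 F)
    (hsmooth : ∀ x, ‖fderiv ℝ (fderiv ℝ F) x‖ ≤ L0 + L1 * ‖fderiv ℝ F x‖) (hL1 : 0 ≤ L1)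
    (w : E) {u : E} (hu : ‖u‖ ≤ 1) {t : ℝ} (ht : 0 ≤ t) :
    F (w + t • u) ≤
      F w + fderiv ℝ F w u * t + (L0 + L1 * ‖fderiv ℝ F w‖) * exp (L1 * t) * t ^ 2 / 2 := by
  have hDF : Differentiable ℝ (fderiv ℝ F) :=
    (hF.fderiv_right (m := 1) (by norm_num)).differentiable (by norm_num)
  have hD2 : ∀ s, HasDerivAt (fun s : ℝ => fderiv ℝ F (w + s • u) u)
      (fderiv ℝ (fderiv ℝ F) (w + s • u) u u) s := fun s => by
    simpa using (hasDerivAt_comp_add_smul hDF w u s).clm_apply (hasDerivAt_const s u)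
  have hsecond : ∀ s ∈ Ico 0 t, fderiv ℝ (fderiv ℝ F) (w + s • u) u u ≤
      (L0 + L1 * ‖fderiv ℝ F w‖) * exp (L1 * t) := by
    intro s hs
    have hM : 0 ≤ L0 + L1 * ‖fderiv ℝ F w‖ :=
      (norm_nonneg (fderiv ℝ (fderiv ℝ F) w)).trans (hsmooth w)
    calc fderiv ℝ (fderiv ℝ F) (w + s • u) u u
        ≤ ‖fderiv ℝ (fderiv ℝ F) (w + s • u) u u‖ := Real.le_norm_self _
      _ ≤ ‖fderiv ℝ (fderiv ℝ F) (w + s • u)‖ * ‖u‖ * ‖u‖ := ContinuousLinearMap.le_opNorm₂ ..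
      _ ≤ ‖fderiv ℝ (fderiv ℝ F) (w + s • u)‖ * 1 * 1 := by gcongr
      _ ≤ L0 + L1 * ‖fderiv ℝ F (w + s • u)‖ := by simpa using hsmooth _
      _ ≤ L0 + L1 * gronwallBound ‖fderiv ℝ F w‖ L1 L0 s := by
          gcongr; exact norm_add_smul_le_gronwallBound hDF hsmooth w hu hs.1
      _ = (L0 + L1 * ‖fderiv ℝ F w‖) * exp (L1 * s) := add_mul_gronwallBound ..
      _ ≤ (L0 + L1 * ‖fderiv ℝ F w‖) * exp (L1 * t) := by gcongr; exact hs.2.le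
  simpa using le_add_deriv_mul_add_of_second_deriv_le ht
    (hasDerivAt_comp_add_smul (hF.differentiable (by norm_num)) w u) hD2 hsecond

end

theorem grad_bound_of_L0L1_smooth_general (d : ℕ)
    (F : EuclideanSpace ℝ (Fin d) → ℝ)
    (hF : ContDiff ℝ 2 F) (hFnn : ∀ w, 0 ≤ F w)
    (L0 L1 : ℝ) (hL1 : 0 < L1)
    (hsmooth : ∀ w, ‖fderiv ℝ (fderiv ℝ F) w‖ ≤ L0 + L1 * ‖gradient F w‖) :
    ∀ w, ‖gradient F w‖ ≤ L0 / (2 * L1) + 4 * L1 * F w := by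
  intro w
  have hnorm : ∀ x, ‖gradient F x‖ = ‖fderiv ℝ F x‖ := fun x => (toDual ℝ _).symm.norm_map _
  simp only [hnorm] at hsmooth ⊢
  obtain ⟨u, hu, hDFu⟩ := (fderiv ℝ F w).exists_norm_le_one_apply_eq_neg_norm
  set g := ‖fderiv ℝ F w‖
  set t := 2 / (5 * L1)
  have hexp : exp (L1 * t) ≤ 5 / 3 := by
    rw [mul_div_left_comm, div_mul_cancel_right₀ hL1.ne']
    exact exp_two_fifths_le
  have hM : 0 ≤ L0 + L1 * g := (norm_nonneg (fderiv ℝ (fderiv ℝ F) w)).trans (hsmooth w)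
  have hdescent : 0 ≤ F w - g * t + (L0 + L1 * g) * (5 / 3) * t ^ 2 / 2 :=
    calc 0 ≤ F (w + t • u) := hFnn _
      _ ≤ F w + -g * t + (L0 + L1 * g) * exp (L1 * t) * t ^ 2 / 2 := by
          simpa only [hDFu] using apply_add_smul_le_of_norm_fderiv_fderiv_le hF hsmooth hL1.le w hu
            (by positivity)
      _ ≤ F w - g * t + (L0 + L1 * g) * (5 / 3) * t ^ 2 / 2 := by
          rw [neg_mul, ← sub_eq_add_neg]; gcongr
  have hg : 4 * L1 * g ≤ 2 * L0 + 15 * L1 ^ 2 * F w := by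
    simp only [t] at hdescent
    field_simp at hdescent
    linarith
  rw [div_add' _ _ _ (by positivity), le_div_iff₀ (by positivity)]
  linarith [mul_nonneg (sq_nonneg L1) (hFnn w)]

/-- If `F ≥ 0` is `C²` and `(L0, L1)`-smooth with `L1 > 0`, then
`‖∇F(w)‖ ≤ L0/(2L1) + 4L1 F(w)` for all `w`. -/
theorem grad_bound_of_L0L1_smooth (d : ℕ) (hd : 1 ≤ d)
    (F : EuclideanSpace ℝ (Fin d) → ℝ)
    (hF : ContDiff ℝ 2 F) (hFnn : ∀ w, 0 ≤ F w)
    (L0 L1 : ℝ) (hL0 : 0 ≤ L0) (hL1 : 0 < L1)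
    (hsmooth : ∀ w, ‖fderiv ℝ (fderiv ℝ F) w‖ ≤ L0 + L1 * ‖gradient F w‖) :
    ∀ w, ‖gradient F w‖ ≤ L0 / (2 * L1) + 4 * L1 * F w :=
  grad_bound_of_L0L1_smooth_general d F hF hFnn L0 L1 hL1 hsmooth
end

section
/- Suppose F : E → ℝ is twice continuously differentiable with F(w) ≥ 0 for all w, and F is (L0, L1)-smooth, i.e. ‖∇²F(w)‖_op ≤ L0 + L1·‖∇F(w)‖ for all w, where L0 > 0 and L1 ≥ 0. Then for all w, ‖∇F(w)‖ ≤ 2·L0^{1/2}·F(w)^{1/2} + (5·L1²/L0^{1/2})·F(w)^{3/2}. -/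
/-!
Walk from `w` in the steepest-descent direction `v = -∇F(w)/‖∇F(w)‖`. The derivative of
`t ↦ DF(w + t v)` is bounded by `L0 + L1‖DF(w + t v)‖`, so Grönwall's inequality keeps
`‖DF(w + t v)‖ ≤ 7/4 ‖∇F(w)‖ + 3/2 L0 t` while `L1 t ≤ 1/2` (as `exp y ≤ 1 + 3y/2` there).
This bounds the second derivative of `t ↦ F(w + t v)`, and since `F ≥ 0`, the resulting quadratic
upper bound at `t = 2F(w)/‖∇F(w)‖` gives `‖∇F(w)‖² ≤ 2 L0 F(w) + 5 L1 F(w) ‖∇F(w)‖`, which solves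
to the claimed bound. The step size is admissible unless
`‖∇F(w)‖ ≤ max (2√(L0 F(w))) (4 L1 F(w))`, where the bound is elementary.
-/

open Real Set

theorem exp_le_one_add_three_halves_mul {y : ℝ} (h0 : 0 ≤ y) (h1 : y ≤ 1 / 2) :
    exp y ≤ 1 + 3 / 2 * y := by
  have h := abs_le.1 (abs_exp_sub_one_sub_id_le (x := y) (by rw [abs_of_nonneg h0]; linarith))
  nlinarith [h.2]

theorem gronwallBound_le_of_mul_le_half {δ K ε x : ℝ} (hδ : 0 ≤ δ) (hK : 0 ≤ K) (hε : 0 ≤ ε)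
    (hx : 0 ≤ x) (hKx : K * x ≤ 1 / 2) :
    gronwallBound δ K ε x ≤ 7 / 4 * δ + 3 / 2 * ε * x := by
  rcases hK.eq_or_lt with rfl | hK
  · rw [gronwallBound_K0]
    nlinarith [mul_nonneg hε hx]
  · have hexp := exp_le_one_add_three_halves_mul (mul_nonneg hK.le hx) hKx
    rw [gronwallBound_of_K_ne_0 hK.ne']
    calc δ * exp (K * x) + ε / K * (exp (K * x) - 1)
        ≤ δ * (1 + 3 / 2 * (1 / 2)) + ε / K * (3 / 2 * (K * x)) := by
          gcongr <;> linarith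
      _ = 7 / 4 * δ + 3 / 2 * ε * x := by field_simp; ring

theorem image_le_of_second_deriv_le {φ φ' φ'' : ℝ → ℝ} {a b M : ℝ}
    (hφ : ∀ t ∈ Icc a b, HasDerivAt φ (φ' t) t) (hφ' : ∀ t ∈ Icc a b, HasDerivAt φ' (φ'' t) t)
    (hM : ∀ t ∈ Ico a b, φ'' t ≤ M) :
    ∀ t ∈ Icc a b, φ t ≤ φ a + φ' a * (t - a) + M * (t - a) ^ 2 / 2 := by
  have hφ'_le : ∀ t ∈ Icc a b, φ' t ≤ φ' a + M * (t - a) := by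
    refine image_le_of_deriv_right_le_deriv_boundary
      (fun t ht => (hφ' t ht).continuousAt.continuousWithinAt)
      (fun t ht => (hφ' t (Ico_subset_Icc_self ht)).hasDerivWithinAt) (by simp) (by fun_prop)
      (fun t _ => ?_) hM
    simpa using (((hasDerivAt_id t).sub_const a).const_mul M).const_add (φ' a) |>.hasDerivWithinAt
  refine image_le_of_deriv_right_le_deriv_boundary
    (fun t ht => (hφ t ht).continuousAt.continuousWithinAt)
    (fun t ht => (hφ t (Ico_subset_Icc_self ht)).hasDerivWithinAt) (by simp) (by fun_prop)
    (fun t _ => ?_) (fun t ht => hφ'_le t (Ico_subset_Icc_self ht))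
  have hlin := (hasDerivAt_id' t).sub_const a
  have hB : HasDerivAt (fun s => φ a + φ' a * (s - a) + M * (s - a) ^ 2 / 2)
      (φ' a + M * (t - a)) t :=
    (((hlin.const_mul (φ' a)).const_add (φ a)).add
      ((hlin.pow 2).const_mul M |>.div_const 2)).congr_deriv (by norm_num; ring)
  exact hB.hasDerivWithinAt

-- `g² - 5bg - 2a²` increases for `g ≥ 5b/2` and is positive at `g = (2a² + 5b²)/a`.
theorem mul_le_of_sq_le_add_mul {a b g : ℝ} (ha : 0 < a) (hb : 0 ≤ b)
    (h : g ^ 2 ≤ 2 * a ^ 2 + 5 * b * g) : g * a ≤ 2 * a ^ 2 + 5 * b ^ 2 := by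
  by_contra! hlt
  have hc : 0 < (2 * a ^ 2 + 5 * b ^ 2) ^ 2 - 5 * a * b * (2 * a ^ 2 + 5 * b ^ 2) - 2 * a ^ 4 := by
    nlinarith [sq_nonneg (5 * b ^ 2 - 5 / 2 * a * b), sq_nonneg (a * b),
      sq_nonneg (a ^ 2 - 5 / 2 * a * b), pow_pos ha 4]
  nlinarith [mul_pos (sub_pos.2 hlt)
    (show 0 < g * a + (2 * a ^ 2 + 5 * b ^ 2) - 5 * a * b by nlinarith [sq_nonneg (a - b)])]

section L0L1Smooth

variable {E F : Type*} [NormedAddCommGroup E] [NormedSpace ℝ E]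
  [NormedAddCommGroup F] [NormedSpace ℝ F]

def IsL0L1Smooth (f : E → F) (L0 L1 : ℝ) : Prop :=
  ∀ x, ‖fderiv ℝ (fderiv ℝ f) x‖ ≤ L0 + L1 * ‖fderiv ℝ f x‖

theorem hasDerivAt_add_smul (w v : E) (s : ℝ) : HasDerivAt (fun s : ℝ => w + s • v) v s := by
  simpa using ((hasDerivAt_id s).smul_const v).const_add w

theorem IsL0L1Smooth.norm_fderiv_fderiv_apply_le {f : E → F} {L0 L1 : ℝ}
    (hsmooth : IsL0L1Smooth f L0 L1) (x : E) {v : E} (hv : ‖v‖ ≤ 1) :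
    ‖fderiv ℝ (fderiv ℝ f) x v‖ ≤ L0 + L1 * ‖fderiv ℝ f x‖ :=
  ((fderiv ℝ (fderiv ℝ f) x).le_of_opNorm_le le_rfl v).trans
    ((mul_le_of_le_one_right (norm_nonneg _) hv).trans (hsmooth x))

theorem ContDiff.hasDerivAt_fderiv_add_smul {f : E → F} (hf : ContDiff ℝ 2 f) (w v : E) (s : ℝ) :
    HasDerivAt (fun s : ℝ => fderiv ℝ f (w + s • v)) (fderiv ℝ (fderiv ℝ f) (w + s • v) v) s :=
  ((hf.fderiv_right (m := 1) le_rfl).differentiable one_ne_zero _).hasFDerivAt.comp_hasDerivAt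
    s (hasDerivAt_add_smul w v s)

theorem IsL0L1Smooth.norm_fderiv_add_smul_le {f : E → F} {L0 L1 : ℝ}
    (hsmooth : IsL0L1Smooth f L0 L1) (hf : ContDiff ℝ 2 f) (hL0 : 0 ≤ L0) (hL1 : 0 ≤ L1)
    (w : E) {v : E} (hv : ‖v‖ ≤ 1) {t : ℝ} (ht : 0 ≤ t) (hL1t : L1 * t ≤ 1 / 2) :
    ‖fderiv ℝ f (w + t • v)‖ ≤ 7 / 4 * ‖fderiv ℝ f w‖ + 3 / 2 * L0 * t := by
  have hgronwall := norm_le_gronwallBound_of_norm_deriv_right_le (δ := ‖fderiv ℝ f w‖)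
    (fun s _ => (hf.hasDerivAt_fderiv_add_smul w v s).continuousAt.continuousWithinAt)
    (fun s _ => (hf.hasDerivAt_fderiv_add_smul w v s).hasDerivWithinAt) (by simp)
    (fun s _ => (hsmooth.norm_fderiv_fderiv_apply_le _ hv).trans_eq (add_comm _ _)) t ⟨ht, le_rfl⟩
  simpa using hgronwall.trans (gronwallBound_le_of_mul_le_half (norm_nonneg _) hL1 hL0
    (by simpa using ht) (by simpa using hL1t))

theorem IsL0L1Smooth.apply_add_smul_le {f : E → ℝ} {L0 L1 : ℝ}
    (hsmooth : IsL0L1Smooth f L0 L1) (hf : ContDiff ℝ 2 f) (hL0 : 0 ≤ L0) (hL1 : 0 ≤ L1)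
    (w : E) {v : E} (hv : ‖v‖ ≤ 1) {t : ℝ} (ht : 0 ≤ t) (hL1t : L1 * t ≤ 1 / 2) :
    f (w + t • v) ≤ f w + fderiv ℝ f w v * t
      + (L0 + L1 * (7 / 4 * ‖fderiv ℝ f w‖ + 3 / 2 * L0 * t)) * t ^ 2 / 2 := by
  have hφ (s : ℝ) : HasDerivAt (fun s : ℝ => f (w + s • v)) (fderiv ℝ f (w + s • v) v) s :=
    (hf.differentiable two_ne_zero _).hasFDerivAt.comp_hasDerivAt s (hasDerivAt_add_smul w v s)
  have hφ' (s : ℝ) : HasDerivAt (fun s : ℝ => fderiv ℝ f (w + s • v) v)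
      (fderiv ℝ (fderiv ℝ f) (w + s • v) v v) s :=
    (ContinuousLinearMap.apply ℝ ℝ v).hasFDerivAt.comp_hasDerivAt s
      (hf.hasDerivAt_fderiv_add_smul w v s)
  have hφ'' : ∀ s ∈ Ico 0 t, fderiv ℝ (fderiv ℝ f) (w + s • v) v v
      ≤ L0 + L1 * (7 / 4 * ‖fderiv ℝ f w‖ + 3 / 2 * L0 * t) := by
    intro s hs
    have hgrad := hsmooth.norm_fderiv_add_smul_le hf hL0 hL1 w hv hs.1
      ((mul_le_mul_of_nonneg_left hs.2.le hL1).trans hL1t)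
    calc fderiv ℝ (fderiv ℝ f) (w + s • v) v v ≤ ‖fderiv ℝ (fderiv ℝ f) (w + s • v) v‖ :=
          (le_abs_self _).trans
            (((fderiv ℝ (fderiv ℝ f) (w + s • v) v).le_of_opNorm_le le_rfl v).trans
              (mul_le_of_le_one_right (norm_nonneg _) hv))
      _ ≤ L0 + L1 * ‖fderiv ℝ f (w + s • v)‖ := hsmooth.norm_fderiv_fderiv_apply_le _ hv
      _ ≤ _ := by gcongr; nlinarith [hs.2]
  simpa using image_le_of_second_deriv_le (fun s _ => hφ s) (fun s _ => hφ' s) hφ'' t ⟨ht, le_rfl⟩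

end L0L1Smooth

section InnerProductSpace

variable {E : Type*} [NormedAddCommGroup E] [InnerProductSpace ℝ E] [CompleteSpace E]

theorem norm_gradient_eq_norm_fderiv (f : E → ℝ) (x : E) : ‖gradient f x‖ = ‖fderiv ℝ f x‖ :=
  (InnerProductSpace.toDual ℝ E).symm.norm_map _

theorem IsL0L1Smooth.sq_norm_gradient_le {f : E → ℝ} {L0 L1 : ℝ}
    (hsmooth : IsL0L1Smooth f L0 L1) (hf : ContDiff ℝ 2 f) (hf_nonneg : ∀ x, 0 ≤ f x)
    (hL0 : 0 ≤ L0) (hL1 : 0 ≤ L1) {w : E} (hpos : 0 < f w)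
    (hL0_lt : 4 * (L0 * f w) < ‖gradient f w‖ ^ 2) (hL1_lt : 4 * (L1 * f w) < ‖gradient f w‖) :
    ‖gradient f w‖ ^ 2 ≤ 2 * (L0 * f w) + 5 * (L1 * f w) * ‖gradient f w‖ := by
  set G := ‖gradient f w‖ with hG_def
  have hG : 0 < G := by nlinarith [mul_nonneg hL1 hpos.le]
  set T := 2 * f w / G
  set v := -G⁻¹ • gradient f w
  have hv : ‖v‖ = 1 := by
    rw [norm_smul, norm_neg, norm_inv, norm_norm]
    exact inv_mul_cancel₀ hG.ne'
  have hdir : fderiv ℝ f w v = -G := by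
    rw [← inner_gradient_left, inner_smul_right, real_inner_self_eq_norm_sq, ← hG_def]
    field_simp
  have hL1T : L1 * T ≤ 1 / 2 := by
    rw [show L1 * T = 2 * (L1 * f w) / G by ring, div_le_iff₀ hG]
    linarith
  have hdescent := (hf_nonneg _).trans
    (hsmooth.apply_add_smul_le hf hL0 hL1 w hv.le (by positivity : 0 ≤ T) hL1T)
  rw [hdir, ← norm_gradient_eq_norm_fderiv] at hdescent
  have hcubic : G ^ 3 ≤ 2 * (L0 * f w) * G + 7 / 2 * (L1 * f w) * G ^ 2
      + 6 * (L0 * f w) * (L1 * f w) := by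
    simp only [T] at hdescent
    field_simp at hdescent
    nlinarith
  have hquadratic : G * G ^ 2 ≤ G * (2 * (L0 * f w) + 5 * (L1 * f w) * G) := by
    nlinarith [mul_le_mul_of_nonneg_left hL0_lt.le (mul_nonneg hL1 hpos.le)]
  exact le_of_mul_le_mul_left hquadratic hG

theorem IsL0L1Smooth.norm_gradient_le {f : E → ℝ} {L0 L1 : ℝ} (hsmooth : IsL0L1Smooth f L0 L1)
    (hf : ContDiff ℝ 2 f) (hf_nonneg : ∀ x, 0 ≤ f x) (hL0 : 0 < L0) (hL1 : 0 ≤ L1) (w : E) :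
    ‖gradient f w‖ ≤ 2 * √L0 * √(f w) + 5 * L1 ^ 2 / √L0 * √(f w) ^ 3 := by
  rcases (hf_nonneg w).eq_or_lt with hzero | hpos
  · have hmin : IsLocalMin f w := Filter.Eventually.of_forall fun x => hzero ▸ hf_nonneg x
    rw [norm_gradient_eq_norm_fderiv, hmin.fderiv_eq_zero, norm_zero]
    positivity
  set G := ‖gradient f w‖
  set a := √L0 * √(f w)
  set b := L1 * f w
  have ha : 0 < a := by positivity
  have hb : 0 ≤ b := by positivity
  have ha2 : a ^ 2 = L0 * f w := by rw [mul_pow, sq_sqrt hL0.le, sq_sqrt hpos.le]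
  have hrhs : 2 * √L0 * √(f w) + 5 * L1 ^ 2 / √L0 * √(f w) ^ 3 = (2 * a ^ 2 + 5 * b ^ 2) / a := by
    have hb' : b = L1 * √(f w) ^ 2 := by rw [sq_sqrt hpos.le]
    rw [eq_div_iff ha.ne', hb']
    field_simp
    ring
  rw [hrhs, le_div_iff₀ ha]
  rcases le_or_gt G (max (2 * a) (4 * b)) with hsmall | hlarge
  · rcases le_max_iff.1 hsmall with h | h <;> nlinarith [sq_nonneg (a - b)]
  obtain ⟨h2a, h4b⟩ := max_lt_iff.1 hlarge
  refine mul_le_of_sq_le_add_mul ha hb ?_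
  rw [ha2]
  exact hsmooth.sq_norm_gradient_le hf hf_nonneg hL0.le hL1 hpos (by nlinarith) h4b

end InnerProductSpace

theorem grad_rho0_bound_of_L0L1_smooth_general (d : ℕ)
    (F : EuclideanSpace ℝ (Fin d) → ℝ)
    (hF : ContDiff ℝ 2 F) (hFnn : ∀ w, 0 ≤ F w)
    (L0 L1 : ℝ) (hL0 : 0 < L0) (hL1 : 0 ≤ L1)
    (hsmooth : ∀ w, ‖fderiv ℝ (fderiv ℝ F) w‖ ≤ L0 + L1 * ‖gradient F w‖) :
    ∀ w, ‖gradient F w‖ ≤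
      2 * L0 ^ ((1 : ℝ) / 2) * F w ^ ((1 : ℝ) / 2)
        + 5 * L1 ^ 2 / L0 ^ ((1 : ℝ) / 2) * F w ^ ((3 : ℝ) / 2) := by
  have hsmooth' : IsL0L1Smooth F L0 L1 := fun w => by
    simpa only [norm_gradient_eq_norm_fderiv] using hsmooth w
  intro w
  rw [← sqrt_eq_rpow, ← sqrt_eq_rpow, rpow_div_two_eq_sqrt _ (hFnn w), rpow_ofNat]
  exact hsmooth'.norm_gradient_le hF hFnn hL0 hL1 w

/-- If `F ≥ 0` is `C²` and `(L0, L1)`-smooth with `L0 > 0`, then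
`‖∇F(w)‖ ≤ 2 L0^{1/2} F(w)^{1/2} + (5 L1²/L0^{1/2}) F(w)^{3/2}` for all `w`. -/
theorem grad_rho0_bound_of_L0L1_smooth (d : ℕ) (hd : 1 ≤ d)
    (F : EuclideanSpace ℝ (Fin d) → ℝ)
    (hF : ContDiff ℝ 2 F) (hFnn : ∀ w, 0 ≤ F w)
    (L0 L1 : ℝ) (hL0 : 0 < L0) (hL1 : 0 ≤ L1)
    (hsmooth : ∀ w, ‖fderiv ℝ (fderiv ℝ F) w‖ ≤ L0 + L1 * ‖gradient F w‖) :
    ∀ w, ‖gradient F w‖ ≤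
      2 * L0 ^ ((1 : ℝ) / 2) * F w ^ ((1 : ℝ) / 2)
        + 5 * L1 ^ 2 / L0 ^ ((1 : ℝ) / 2) * F w ^ ((3 : ℝ) / 2) :=
  grad_rho0_bound_of_L0L1_smooth_general d F hF hFnn L0 L1 hL0 hL1 hsmooth
end

section
/- Under the second-order self-bounding assumption, for every w ∈ E one has ‖∇F(w)‖ ≤ ρ0(F(w)), where ρ0(x) = ρ1(x)·√(2·θ(x)) and θ(x) = ∫₀ˣ 1/ρ1(v) dv. -/
/-- `θ(x) = ∫₀ˣ 1/ρ1(v) dv`. -/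
noncomputable def sbTheta (ρ1 : ℝ → ℝ) (x : ℝ) : ℝ := ∫ v in (0 : ℝ)..x, 1 / ρ1 v

/-- `ρ0(x) = ρ1(x)·√(2 θ(x))`. -/
noncomputable def sbRho0 (ρ1 : ℝ → ℝ) (x : ℝ) : ℝ := ρ1 x * Real.sqrt (2 * sbTheta ρ1 x)

/-!
Walk from `w` along the direction of steepest descent. As long as `F` stays below `F w`, the
Hessian along the path is bounded by `M = ρ1 (F w)`, so `F` keeps decreasing up to time
`‖∇F w‖ / M`, by which it has dropped by at least `‖∇F w‖² / (2 M)`. Since `F ≥ 0`, this gives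
`‖∇F w‖² ≤ 2 ρ1(F w) F w`. Monotonicity of `ρ1` gives `θ x ≥ x / ρ1 x`, which turns this bound
into `‖∇F w‖ ≤ ρ0 (F w)`.
-/

open Set Filter Topology

lemma HasDerivAt.eventually_nhdsGT_lt_of_neg {u : ℝ → ℝ} {u' x : ℝ} (hu : HasDerivAt u u' x)
    (hneg : u' < 0) : ∀ᶠ y in 𝓝[>] x, u y < u x := by
  filter_upwards [hu.hasDerivWithinAt.limsup_slope_le' (lt_irrefl x) hneg, self_mem_nhdsWithin]
    with y hslope hxy
  rw [slope_def_field, div_neg_iff] at hslope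
  rcases hslope with h | h <;> linarith [mem_Ioi.mp hxy]

section SecondDerivativeBound

variable {u p q : ℝ → ℝ} {M a b : ℝ}

lemma le_add_mul_sub_of_deriv_le (hp : ∀ t, HasDerivAt p (q t) t) (hq : ∀ t ∈ Icc a b, q t ≤ M) :
    ∀ t ∈ Icc a b, p t ≤ p a + M * (t - a) := by
  have hB : ∀ t, HasDerivAt (fun t ↦ p a + M * (t - a)) M t := fun t ↦ by
    simpa using (((hasDerivAt_id t).sub_const a).const_mul M).const_add (p a)
  refine image_le_of_deriv_right_le_deriv_boundary
    (fun t _ ↦ (hp t).continuousAt.continuousWithinAt) (fun t _ ↦ (hp t).hasDerivWithinAt)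
    (by simp) (fun t _ ↦ (hB t).continuousAt.continuousWithinAt)
    (fun t _ ↦ (hB t).hasDerivWithinAt) (fun t ht ↦ hq t (Ico_subset_Icc_self ht))

lemma le_quadratic_of_deriv2_le (hu : ∀ t, HasDerivAt u (p t) t) (hp : ∀ t, HasDerivAt p (q t) t)
    (hq : ∀ t ∈ Icc a b, q t ≤ M) :
    ∀ t ∈ Icc a b, u t ≤ u a + p a * (t - a) + M * (t - a) ^ 2 / 2 := by
  have hB : ∀ t, HasDerivAt (fun t ↦ u a + p a * (t - a) + M * (t - a) ^ 2 / 2)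
      (p a + M * (t - a)) t := fun t ↦ by
    have h := (hasDerivAt_id' t).sub_const a
    exact (((h.const_mul (p a)).const_add (u a)).add ((h.pow 2).const_mul M |>.div_const 2))
      |>.congr_deriv (by simp; ring)
  refine image_le_of_deriv_right_le_deriv_boundary
    (fun t _ ↦ (hu t).continuousAt.continuousWithinAt) (fun t _ ↦ (hu t).hasDerivWithinAt)
    (by simp) (fun t _ ↦ (hB t).continuousAt.continuousWithinAt)
    (fun t _ ↦ (hB t).hasDerivWithinAt)
    (fun t ht ↦ le_add_mul_sub_of_deriv_le hp hq t (Ico_subset_Icc_self ht))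

theorem sq_deriv_le_of_deriv2_le_on_sublevel (hM : 0 < M)
    (hu : ∀ t, HasDerivAt u (p t) t) (hp : ∀ t, HasDerivAt p (q t) t)
    (hq : ∀ t, 0 ≤ t → u t ≤ u 0 → q t ≤ M) (hu_nonneg : ∀ t, 0 ≤ u t) (hp0 : p 0 ≤ 0) :
    p 0 ^ 2 ≤ 2 * M * u 0 := by
  set T := -p 0 / M
  have hMT : M * T = -p 0 := mul_div_cancel₀ _ hM.ne'
  have hT : 0 ≤ T := div_nonneg (neg_nonneg.mpr hp0) hM.le
  have hu_cont : Continuous u := continuous_iff_continuousAt.mpr fun t ↦ (hu t).continuousAt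
  -- Continuous induction: while `u ≤ u 0` on `[0, t]` with `t < T`, the bound on `q` gives
  -- `p t ≤ p 0 + M t < 0`, so `u` keeps decreasing past `t`.
  have hsublevel : Icc 0 T ⊆ {t | u t ≤ u 0} := by
    refine IsClosed.Icc_subset_of_forall_mem_nhdsGT_of_Icc_subset
      ((isClosed_le hu_cont continuous_const).inter isClosed_Icc) (mem_ofPred.mpr le_rfl)
      fun t ht hsub ↦ ?_
    have hpt := le_add_mul_sub_of_deriv_le hp (fun s hs ↦ hq s hs.1 (hsub hs)) t ⟨ht.1, le_rfl⟩
    have hneg : p t < 0 := by nlinarith [ht.2]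
    filter_upwards [(hu t).eventually_nhdsGT_lt_of_neg hneg] with s hs
    exact hs.le.trans (hsub ⟨ht.1, le_rfl⟩)
  have hquad :=
    le_quadratic_of_deriv2_le hu hp (fun s hs ↦ hq s hs.1 (hsublevel hs)) T ⟨hT, le_rfl⟩
  nlinarith [hu_nonneg T]

end SecondDerivativeBound

section Line

variable {E G : Type*} [NormedAddCommGroup E] [NormedSpace ℝ E] [NormedAddCommGroup G]
  [NormedSpace ℝ G] {F : E → G}

lemma Differentiable.hasDerivAt_comp_line (hF : Differentiable ℝ F) (w v : E) (t : ℝ) :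
    HasDerivAt (fun t : ℝ ↦ F (w + t • v)) (fderiv ℝ F (w + t • v) v) t :=
  (hF _).hasFDerivAt.comp_hasDerivAt t
    (by simpa using ((hasDerivAt_id t).smul_const v).const_add w)

lemma ContDiff.hasDerivAt_fderiv_comp_line (hF : ContDiff ℝ 2 F) (w v : E) (t : ℝ) :
    HasDerivAt (fun t : ℝ ↦ fderiv ℝ F (w + t • v) v)
      (fderiv ℝ (fderiv ℝ F) (w + t • v) v v) t :=
  (ContinuousLinearMap.apply ℝ G v).hasFDerivAt.comp_hasDerivAt t
    (((hF.fderiv_right (m := 1) (by norm_num)).differentiable one_ne_zero).hasDerivAt_comp_line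
      w v t)

end Line

theorem norm_gradient_sq_le_of_norm_fderiv_fderiv_le {E : Type*} [NormedAddCommGroup E]
    [InnerProductSpace ℝ E] [CompleteSpace E] {F : E → ℝ} (hF : ContDiff ℝ 2 F)
    (hF_nonneg : ∀ x, 0 ≤ F x) {w : E} {M : ℝ} (hM : 0 < M)
    (hbound : ∀ x, F x ≤ F w → ‖fderiv ℝ (fderiv ℝ F) x‖ ≤ M) :
    ‖gradient F w‖ ^ 2 ≤ 2 * M * F w := by
  rcases eq_or_ne (gradient F w) 0 with hg | hg
  · calc ‖gradient F w‖ ^ 2 = 0 := by simp [hg]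
      _ ≤ 2 * M * F w := by have := hF_nonneg w; positivity
  set v := -(‖gradient F w‖⁻¹ • gradient F w)
  have hv : ‖v‖ = 1 := by rw [norm_neg]; exact norm_smul_inv_norm hg
  have hp0 : fderiv ℝ F (w + (0 : ℝ) • v) v = -‖gradient F w‖ := by
    rw [zero_smul, add_zero, ← toDual_gradient, InnerProductSpace.toDual_apply_apply,
      inner_neg_right, real_inner_smul_right, real_inner_self_eq_norm_sq]
    field_simp
  have hq : ∀ t : ℝ, 0 ≤ t → F (w + t • v) ≤ F (w + (0 : ℝ) • v) →
      fderiv ℝ (fderiv ℝ F) (w + t • v) v v ≤ M := fun t _ ht ↦ by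
    rw [zero_smul, add_zero] at ht
    calc _ ≤ ‖fderiv ℝ (fderiv ℝ F) (w + t • v) v v‖ := Real.le_norm_self _
      _ ≤ ‖fderiv ℝ (fderiv ℝ F) (w + t • v)‖ * ‖v‖ * ‖v‖ :=
        ContinuousLinearMap.le_opNorm₂ _ _ _
      _ ≤ M := by simpa [hv] using hbound _ ht
  have h := sq_deriv_le_of_deriv2_le_on_sublevel hM
    ((hF.differentiable (by norm_num)).hasDerivAt_comp_line w v)
    (hF.hasDerivAt_fderiv_comp_line w v) hq (fun t ↦ hF_nonneg _)
    (by rw [hp0]; exact neg_nonpos.mpr (norm_nonneg _))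
  rwa [hp0, neg_sq, zero_smul, add_zero] at h

lemma div_le_sbTheta {ρ1 : ℝ → ℝ} (hmono : MonotoneOn ρ1 (Ici 0))
    (hpos : ∀ x ∈ Ici (0 : ℝ), 0 < ρ1 x) {x : ℝ} (hx : 0 ≤ x) : x / ρ1 x ≤ sbTheta ρ1 x := by
  have hanti : AntitoneOn (fun v ↦ 1 / ρ1 v) (uIcc 0 x) := fun s hs t ht hst ↦
    one_div_le_one_div_of_le (hpos s (uIcc_of_le hx ▸ hs).1)
      (hmono (uIcc_of_le hx ▸ hs).1 (uIcc_of_le hx ▸ ht).1 hst)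
  have hconst : ∫ _ in (0 : ℝ)..x, 1 / ρ1 x = x / ρ1 x := by
    rw [intervalIntegral.integral_const, smul_eq_mul, sub_zero, mul_one_div]
  calc x / ρ1 x = ∫ _ in (0 : ℝ)..x, 1 / ρ1 x := hconst.symm
    _ ≤ sbTheta ρ1 x := intervalIntegral.integral_mono_on hx intervalIntegrable_const
        hanti.intervalIntegrable fun v hv ↦
          one_div_le_one_div_of_le (hpos v hv.1) (hmono hv.1 (mem_Ici.mpr hx) hv.2)

lemma sqrt_two_mul_mul_le_sbRho0 {ρ1 : ℝ → ℝ} (hmono : MonotoneOn ρ1 (Ici 0))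
    (hpos : ∀ x ∈ Ici (0 : ℝ), 0 < ρ1 x) {x : ℝ} (hx : 0 ≤ x) :
    √(2 * ρ1 x * x) ≤ sbRho0 ρ1 x := by
  have hρ := hpos x hx
  have hθ := (div_le_iff₀ hρ).mp (div_le_sbTheta hmono hpos hx)
  calc √(2 * ρ1 x * x) ≤ √(ρ1 x ^ 2 * (2 * sbTheta ρ1 x)) := Real.sqrt_le_sqrt (by nlinarith)
    _ = sbRho0 ρ1 x := by rw [Real.sqrt_mul (sq_nonneg _), Real.sqrt_sq hρ.le, sbRho0]

theorem grad_le_rho0_of_selfbounding_general (d : ℕ)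
    (F : EuclideanSpace ℝ (Fin d) → ℝ)
    (hF : ContDiff ℝ 2 F) (hFnn : ∀ w, 0 ≤ F w)
    (ρ1 : ℝ → ℝ) (hρ1mono : MonotoneOn ρ1 (Set.Ici 0))
    (hρ1pos : ∀ x ∈ Set.Ici (0 : ℝ), 0 < ρ1 x)
    (hbound : ∀ w, ‖fderiv ℝ (fderiv ℝ F) w‖ ≤ ρ1 (F w)) :
    ∀ w, ‖gradient F w‖ ≤ sbRho0 ρ1 (F w) := by
  intro w
  have hgrad : ‖gradient F w‖ ^ 2 ≤ 2 * ρ1 (F w) * F w :=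
    norm_gradient_sq_le_of_norm_fderiv_fderiv_le hF hFnn (hρ1pos _ (hFnn w))
      fun x hx ↦ (hbound x).trans (hρ1mono (hFnn x) (hFnn w) hx)
  calc ‖gradient F w‖ = |‖gradient F w‖| := (abs_norm _).symm
    _ ≤ √(2 * ρ1 (F w) * F w) := Real.abs_le_sqrt hgrad
    _ ≤ sbRho0 ρ1 (F w) := sqrt_two_mul_mul_le_sbRho0 hρ1mono hρ1pos (hFnn w)

/-- Under the second-order self-bounding assumption, `‖∇F(w)‖ ≤ ρ0(F(w))` for all `w`. -/
theorem grad_le_rho0_of_selfbounding (d : ℕ) (hd : 1 ≤ d)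
    (F : EuclideanSpace ℝ (Fin d) → ℝ)
    (hF : ContDiff ℝ 2 F) (hFnn : ∀ w, 0 ≤ F w)
    (ρ1 : ℝ → ℝ) (hρ1mono : MonotoneOn ρ1 (Set.Ici 0))
    (hρ1cont : ContinuousOn ρ1 (Set.Ici 0))
    (hρ1pos : ∀ x ∈ Set.Ici (0 : ℝ), 0 < ρ1 x)
    (hbound : ∀ w, ‖fderiv ℝ (fderiv ℝ F) w‖ ≤ ρ1 (F w)) :
    ∀ w, ‖gradient F w‖ ≤ sbRho0 ρ1 (F w) :=
  grad_le_rho0_of_selfbounding_general d F hF hFnn ρ1 hρ1mono hρ1pos hbound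
end

section
/- Under the second-order self-bounding assumption, fix w0 ∈ E and ε > 0, set L1(w0) = max{1, ρ0(F(w0)+1), ρ0(F(w0))·ρ0(F(w0)+1), ρ1(F(w0)+1)} and η = 1/L1(w0), and define gradient-descent iterates by w_{t+1} = w_t − η·∇F(w_t) starting from w0. Then there exists a natural number t with t ≤ 2·F(w0)·L1(w0)/ε² such that ‖∇F(w_t)‖ ≤ ε. -/
/-!
On the sublevel set `{F ≤ F w0 + 1}` the Hessian is bounded by `ρ1 (F w0 + 1) ≤ L1(w0)`, so
there the descent lemma holds: a gradient step of size `1/L` from `x` decreases `F` by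
`‖∇F x‖² / (2L)`. The step cannot leave that sublevel set: at the first time `T` the ray
`r ↦ x - r • ∇F x` reaches the level `F w0 + 1`, the descent lemma on the segment `[0, T]`
already gives `F ≤ F x < F w0 + 1`. Hence `F (w t)` decreases, `∑_{t<N} ‖∇F (w t)‖² ≤ 2 L F w0`
for every `N`, and some `t ≤ 2 F(w0) L / ε²` has `‖∇F (w t)‖ ≤ ε`.
-/

open Set InnerProductSpace
open scoped Gradient

theorem Convex.image_le_add_fderiv_add_of_norm_fderiv_fderiv_le {E : Type*}
    [NormedAddCommGroup E] [NormedSpace ℝ E] {f : E → ℝ} (hf : ContDiff ℝ 2 f) {s : Set E}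
    (hs : Convex ℝ s) {L : ℝ} (hL : ∀ q ∈ s, ‖fderiv ℝ (fderiv ℝ f) q‖ ≤ L) {x y : E}
    (hx : x ∈ s) (hy : y ∈ s) :
    f y ≤ f x + fderiv ℝ f x (y - x) + L / 2 * ‖y - x‖ ^ 2 := by
  set v := y - x
  have hf' : Differentiable ℝ (fderiv ℝ f) :=
    (hf.fderiv_right (m := 1) le_rfl).differentiable one_ne_zero
  have hslope : ∀ r ∈ Icc (0 : ℝ) 1,
      fderiv ℝ f (x + r • v) v - fderiv ℝ f x v ≤ L * ‖v‖ ^ 2 * r := by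
    intro r hr
    have hLip := hs.norm_image_sub_le_of_norm_fderiv_le (fun q _ => hf' q) hL hx
      (hs.add_smul_sub_mem hx hy hr)
    calc fderiv ℝ f (x + r • v) v - fderiv ℝ f x v
        ≤ ‖(fderiv ℝ f (x + r • v) - fderiv ℝ f x) v‖ := Real.le_norm_self _
      _ ≤ ‖fderiv ℝ f (x + r • v) - fderiv ℝ f x‖ * ‖v‖ := ContinuousLinearMap.le_opNorm _ _
      _ ≤ L * ‖r • v‖ * ‖v‖ := by gcongr; simpa using hLip
      _ = L * ‖v‖ ^ 2 * r := by rw [norm_smul, Real.norm_of_nonneg hr.1]; ring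
  let u (r : ℝ) := f (x + r • v) - r * fderiv ℝ f x v - L / 2 * ‖v‖ ^ 2 * r ^ 2
  have hu (r : ℝ) :
      HasDerivAt u (fderiv ℝ f (x + r • v) v - fderiv ℝ f x v - L * ‖v‖ ^ 2 * r) r := by
    have hline : HasDerivAt (fun r : ℝ => x + r • v) v r := by
      simpa using ((hasDerivAt_id r).smul_const v).const_add x
    have := (((hf.differentiable two_ne_zero _).hasFDerivAt.comp_hasDerivAt r hline).sub
      ((hasDerivAt_id r).mul_const (fderiv ℝ f x v))).sub
      ((hasDerivAt_pow 2 r).const_mul (L / 2 * ‖v‖ ^ 2))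
    exact this.congr_deriv (by norm_num; ring)
  have hu_anti : AntitoneOn u (Icc 0 1) :=
    antitoneOn_of_hasDerivWithinAt_nonpos (convex_Icc 0 1)
      (fun r _ => (hu r).continuousAt.continuousWithinAt) (fun r _ => (hu r).hasDerivWithinAt)
      (fun r hr => by
        rw [interior_Icc] at hr
        linarith [hslope r (Ioo_subset_Icc_self hr)])
  have h10 := hu_anti (left_mem_Icc.2 zero_le_one) (right_mem_Icc.2 zero_le_one) zero_le_one
  simp only [u, zero_smul, add_zero, one_smul, zero_mul, one_mul, sub_zero, one_pow] at h10
  simp only [v, add_sub_cancel] at h10 ⊢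
  linarith

theorem sum_sq_le_of_descent {a g : ℕ → ℝ} {L : ℝ} (hL : 0 < L)
    (hdesc : ∀ n, a n ≤ a 0 → a (n + 1) ≤ a n - g n ^ 2 / (2 * L)) (N : ℕ) :
    ∑ n ∈ Finset.range N, g n ^ 2 ≤ 2 * L * (a 0 - a N) := by
  induction N with
  | zero => simp
  | succ N ih =>
    have hsum : 0 ≤ ∑ n ∈ Finset.range N, g n ^ 2 := Finset.sum_nonneg fun n _ => sq_nonneg (g n)
    have haN : a N ≤ a 0 := by nlinarith
    have hstep := hdesc N haN
    have hcancel : 2 * L * (g N ^ 2 / (2 * L)) = g N ^ 2 := by field_simp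
    rw [Finset.sum_range_succ]
    nlinarith

theorem exists_le_of_descent {a g : ℕ → ℝ} {L ε : ℝ} (hL : 0 < L) (hε : 0 < ε)
    (ha : ∀ n, 0 ≤ a n) (hdesc : ∀ n, a n ≤ a 0 → a (n + 1) ≤ a n - g n ^ 2 / (2 * L)) :
    ∃ t : ℕ, (t : ℝ) ≤ 2 * a 0 * L / ε ^ 2 ∧ g t ≤ ε := by
  set B := 2 * a 0 * L / ε ^ 2
  have hB : 0 ≤ B := by have := ha 0; positivity
  by_contra! hlarge
  set N := ⌊B⌋₊ + 1
  have hlower : N * ε ^ 2 ≤ ∑ n ∈ Finset.range N, g n ^ 2 := by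
    have hgrad : ∀ n ∈ Finset.range N, ε ^ 2 ≤ g n ^ 2 := fun n hn => by
      have hn : (n : ℝ) ≤ B := (Nat.le_floor_iff hB).1 (Nat.lt_succ_iff.1 (Finset.mem_range.1 hn))
      exact pow_le_pow_left₀ hε.le (hlarge n hn).le 2
    simpa using Finset.card_nsmul_le_sum _ _ _ hgrad
  have hupper := sum_sq_le_of_descent hL hdesc N
  have hBε : B * ε ^ 2 = 2 * a 0 * L := div_mul_cancel₀ _ (by positivity)
  have hBN : B < N := by simpa [N] using Nat.lt_floor_add_one B
  nlinarith [ha N, mul_lt_mul_of_pos_right hBN (pow_pos hε 2)]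

section Gradient

variable {E : Type*} [NormedAddCommGroup E] [InnerProductSpace ℝ E] [CompleteSpace E]
  {f : E → ℝ} {x : E} {L t : ℝ}

theorem image_sub_smul_gradient_le (hf : ContDiff ℝ 2 f) (ht : 0 ≤ t) (hLt : L * t ≤ 1)
    (hL : ∀ r ∈ Icc 0 t, ‖fderiv ℝ (fderiv ℝ f) (x - r • ∇ f x)‖ ≤ L) :
    f (x - t • ∇ f x) ≤ f x - t / 2 * ‖∇ f x‖ ^ 2 := by
  set g := ∇ f x
  have hseg : ∀ q ∈ segment ℝ x (x - t • g), ‖fderiv ℝ (fderiv ℝ f) q‖ ≤ L := by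
    rw [segment_eq_image']
    rintro _ ⟨θ, hθ, rfl⟩
    convert hL (θ * t) ⟨mul_nonneg hθ.1 ht, mul_le_of_le_one_left ht hθ.2⟩ using 4
    module
  have h := (convex_segment _ _).image_le_add_fderiv_add_of_norm_fderiv_fderiv_le hf hseg
    (left_mem_segment ℝ x (x - t • g)) (right_mem_segment ℝ x (x - t • g))
  rw [sub_sub_cancel_left, norm_neg, norm_smul, Real.norm_eq_abs, abs_of_nonneg ht, map_neg,
    map_smul, ← inner_gradient_left, real_inner_self_eq_norm_sq, smul_eq_mul] at h
  nlinarith [mul_le_mul_of_nonneg_left hLt ht, sq_nonneg ‖g‖]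

theorem image_sub_smul_gradient_le_of_sublevel (hf : ContDiff ℝ 2 f) {c : ℝ}
    (hHess : ∀ q, f q ≤ c → ‖fderiv ℝ (fderiv ℝ f) q‖ ≤ L) (hx : f x < c) (ht : 0 ≤ t)
    (hLt : L * t ≤ 1) :
    f (x - t • ∇ f x) ≤ f x - t / 2 * ‖∇ f x‖ ^ 2 := by
  have hφ : Continuous fun r : ℝ => f (x - r • ∇ f x) := hf.continuous.comp (by fun_prop)
  suffices hstay : ∀ r ∈ Icc 0 t, f (x - r • ∇ f x) ≤ c from
    image_sub_smul_gradient_le hf ht hLt fun r hr => hHess _ (hstay r hr)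
  by_contra! ⟨r₀, hr₀, hr₀c⟩
  set S := Icc 0 t ∩ {r | c ≤ f (x - r • ∇ f x)}
  have hS_bdd : BddBelow S := ⟨0, fun r hr => hr.1.1⟩
  have hTS : sInf S ∈ S :=
    (isClosed_Icc.inter (isClosed_le continuous_const hφ)).csInf_mem ⟨r₀, hr₀, hr₀c.le⟩ hS_bdd
  set T := sInf S
  have hbefore : ∀ r ∈ Ico 0 T, f (x - r • ∇ f x) < c := fun r hr =>
    not_le.1 fun h => (csInf_le hS_bdd ⟨⟨hr.1, hr.2.le.trans hTS.1.2⟩, h⟩).not_gt hr.2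
  have hT : f (x - T • ∇ f x) ≤ c := by
    obtain ⟨r, hr, hrc⟩ := intermediate_value_Icc hTS.1.1 hφ.continuousOn
      ⟨by simpa using hx.le, hTS.2⟩
    obtain rfl : r = T := le_antisymm hr.2 (csInf_le hS_bdd ⟨⟨hr.1, hr.2.trans hTS.1.2⟩, hrc.ge⟩)
    exact hrc.le
  have hL : 0 ≤ L := (norm_nonneg (fderiv ℝ (fderiv ℝ f) x)).trans (hHess x hx.le)
  have hdesc := image_sub_smul_gradient_le hf hTS.1.1
    ((mul_le_mul_of_nonneg_left hTS.1.2 hL).trans hLt) fun r hr => hHess _ <| by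
      rcases hr.2.lt_or_eq with hrT | rfl
      exacts [(hbefore r ⟨hr.1, hrT⟩).le, hT]
  have hcT : c ≤ f (x - T • ∇ f x) := hTS.2
  nlinarith [hTS.1.1, sq_nonneg ‖∇ f x‖]

end Gradient

theorem gd_finds_fosp_of_selfbounding_general (d : ℕ)
    (F : EuclideanSpace ℝ (Fin d) → ℝ)
    (hF : ContDiff ℝ 2 F) (hFnn : ∀ w, 0 ≤ F w)
    (ρ1 : ℝ → ℝ) (hρ1mono : MonotoneOn ρ1 (Set.Ici 0))
    (hbound : ∀ w, ‖fderiv ℝ (fderiv ℝ F) w‖ ≤ ρ1 (F w))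
    (w0 : EuclideanSpace ℝ (Fin d)) (ε : ℝ) (hε : 0 < ε)
    (L1w0 : ℝ)
    (hL1w0 : L1w0 = max (max 1 (sbRho0 ρ1 (F w0 + 1)))
      (max (sbRho0 ρ1 (F w0) * sbRho0 ρ1 (F w0 + 1)) (ρ1 (F w0 + 1))))
    (w : ℕ → EuclideanSpace ℝ (Fin d)) (hw0 : w 0 = w0)
    (hrec : ∀ t, w (t + 1) = w t - (1 / L1w0) • gradient F (w t)) :
    ∃ t : ℕ, (t : ℝ) ≤ 2 * F w0 * L1w0 / ε ^ 2 ∧ ‖gradient F (w t)‖ ≤ ε := by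
  have hL1 : 1 ≤ L1w0 := hL1w0 ▸ le_max_of_le_left (le_max_left _ _)
  have hρL : ρ1 (F w0 + 1) ≤ L1w0 := hL1w0 ▸ le_max_of_le_right (le_max_right _ _)
  have hHess : ∀ q, F q ≤ F w0 + 1 → ‖fderiv ℝ (fderiv ℝ F) q‖ ≤ L1w0 := fun q hq =>
    (hbound q).trans <| (hρ1mono (hFnn q) (mem_Ici.2 (by linarith [hFnn w0])) hq).trans hρL
  have hL : 0 < L1w0 := by linarith
  obtain ⟨t, ht, hgrad⟩ := exists_le_of_descent (a := fun t => F (w t))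
    (g := fun t => ‖∇ F (w t)‖) hL hε (fun t => hFnn (w t)) fun t ht => by
      have hstep := image_sub_smul_gradient_le_of_sublevel (x := w t) (t := 1 / L1w0) hF hHess
        (by linarith [hw0 ▸ ht]) (by positivity) (mul_one_div_cancel hL.ne').le
      rw [hrec]
      convert hstep using 2
      ring
  exact ⟨t, hw0 ▸ ht, hgrad⟩

/-- Gradient descent with step size `1/L1(w0)` started at `w0` finds an `ε`-stationary
point within `2 F(w0) L1(w0) / ε²` iterations, under the second-order self-bounding
assumption. -/
theorem gd_finds_fosp_of_selfbounding (d : ℕ) (hd : 1 ≤ d)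
    (F : EuclideanSpace ℝ (Fin d) → ℝ)
    (hF : ContDiff ℝ 2 F) (hFnn : ∀ w, 0 ≤ F w)
    (ρ1 : ℝ → ℝ) (hρ1mono : MonotoneOn ρ1 (Set.Ici 0))
    (hρ1cont : ContinuousOn ρ1 (Set.Ici 0))
    (hρ1pos : ∀ x ∈ Set.Ici (0 : ℝ), 0 < ρ1 x)
    (hbound : ∀ w, ‖fderiv ℝ (fderiv ℝ F) w‖ ≤ ρ1 (F w))
    (w0 : EuclideanSpace ℝ (Fin d)) (ε : ℝ) (hε : 0 < ε)
    (L1w0 : ℝ)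
    (hL1w0 : L1w0 = max (max 1 (sbRho0 ρ1 (F w0 + 1)))
      (max (sbRho0 ρ1 (F w0) * sbRho0 ρ1 (F w0 + 1)) (ρ1 (F w0 + 1))))
    (w : ℕ → EuclideanSpace ℝ (Fin d)) (hw0 : w 0 = w0)
    (hrec : ∀ t, w (t + 1) = w t - (1 / L1w0) • gradient F (w t)) :
    ∃ t : ℕ, (t : ℝ) ≤ 2 * F w0 * L1w0 / ε ^ 2 ∧ ‖gradient F (w t)‖ ≤ ε :=
  gd_finds_fosp_of_selfbounding_general d F hF hFnn ρ1 hρ1mono hbound w0 ε hε L1w0 hL1w0 w hw0 hrec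
end

section
/- Under the second-order self-bounding assumption, fix w0 ∈ E and set L1(w0) = max{1, ρ0(F(w0)+1), ρ0(F(w0))·ρ0(F(w0)+1), ρ1(F(w0)+1)}. Let u0 ∈ E satisfy F(u0) ≤ F(w0), let 0 ≤ η ≤ 1/L1(w0), and define u_{t+1} = u_t − η·∇F(u_t). Then F(u_t) ≤ F(u_0) for every natural number t. -/
open Set

lemma antitoneOn_Icc_of_antitoneOn_sublevel {g : ℝ → ℝ} {a b c M : ℝ}
    (hg : ContinuousOn g (Icc a b)) (hcM : c < M) (ha : g a ≤ c)
    (hanti : ∀ b' ≤ b, (∀ r ∈ Icc a b', g r ≤ M) → AntitoneOn g (Icc a b')) :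
    AntitoneOn g (Icc a b) := by
  refine hanti b le_rfl fun r hr => ?_
  by_contra! hMr
  -- `s` is the first time `g` reaches `M`; before it `g ≤ M`, so `g` decreases up to `s`.
  set A := Icc a b ∩ g ⁻¹' Ici M
  set s := sInf A
  have hA_bdd : BddBelow A := ⟨a, fun x hx => hx.1.1⟩
  have hs : s ∈ A :=
    (hg.preimage_isClosed_of_isClosed isClosed_Icc isClosed_Ici).csInf_mem ⟨r, hr, hMr.le⟩
      hA_bdd
  have has : a < s := lt_of_le_of_ne hs.1.1 fun h => by
    have : M ≤ g a := h ▸ hs.2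
    linarith
  have hbelow : Icc a s ⊆ Icc a b ∩ g ⁻¹' Iic M := by
    rw [← closure_Ico has.ne]
    refine closure_minimal (fun x hx => ⟨⟨hx.1, hx.2.le.trans hs.1.2⟩, ?_⟩)
      (hg.preimage_isClosed_of_isClosed isClosed_Icc isClosed_Iic)
    exact le_of_not_gt fun hx' : M < g x =>
      hx.2.not_ge (csInf_le hA_bdd ⟨⟨hx.1, hx.2.le.trans hs.1.2⟩, hx'.le⟩)
  have hdecr := hanti s hs.1.2 (fun x hx => (hbelow hx).2)
    (left_mem_Icc.2 has.le) (right_mem_Icc.2 has.le) has.le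
  have hMs : M ≤ g s := hs.2
  linarith

section Ray

variable {E G : Type*} [NormedAddCommGroup E] [NormedSpace ℝ E] [NormedAddCommGroup G]
  [NormedSpace ℝ G] {f : E → G} {v h : E}

lemma DifferentiableAt.hasDerivAt_sub_smul {r : ℝ} (hf : DifferentiableAt ℝ f (v - r • h)) :
    HasDerivAt (fun r : ℝ => f (v - r • h)) (-fderiv ℝ f (v - r • h) h) r := by
  simpa [Function.comp_def] using
    hf.hasFDerivAt.comp_hasDerivAt r (((hasDerivAt_id r).smul_const h).const_sub v)

lemma norm_image_sub_smul_sub_le_of_norm_fderiv_le {s L : ℝ} (hs : 0 ≤ s)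
    (hf : Differentiable ℝ f) (hL : ∀ r ∈ Icc 0 s, ‖fderiv ℝ f (v - r • h)‖ ≤ L) :
    ‖f (v - s • h) - f v‖ ≤ L * ‖h‖ * s := by
  have hbound : ∀ r ∈ Ico 0 s, ‖-fderiv ℝ f (v - r • h) h‖ ≤ L * ‖h‖ := by
    intro r hr
    rw [norm_neg]
    exact ((fderiv ℝ f _).le_opNorm h).trans
      (mul_le_mul_of_nonneg_right (hL r (Ico_subset_Icc_self hr)) (norm_nonneg h))
  simpa using norm_image_sub_le_of_norm_deriv_le_segment'
    (fun r _ => (hf _).hasDerivAt_sub_smul.hasDerivWithinAt) hbound s ⟨hs, le_rfl⟩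

end Ray

variable {E : Type*} [NormedAddCommGroup E] [InnerProductSpace ℝ E] [CompleteSpace E]
  {F : E → ℝ}

lemma fderiv_sub_smul_gradient_apply_gradient_nonneg {v : E} {s L : ℝ} (hs : 0 ≤ s)
    (hsL : s * L ≤ 1) (hF' : Differentiable ℝ (fderiv ℝ F))
    (hL : ∀ r ∈ Icc 0 s, ‖fderiv ℝ (fderiv ℝ F) (v - r • gradient F v)‖ ≤ L) :
    0 ≤ fderiv ℝ F (v - s • gradient F v) (gradient F v) := by
  set g := gradient F v
  set w := v - s • g
  have hself : fderiv ℝ F v g = ‖g‖ ^ 2 := by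
    rw [← inner_gradient_left, real_inner_self_eq_norm_sq]
  have hdev : ‖(fderiv ℝ F w - fderiv ℝ F v) g‖ ≤ L * ‖g‖ * s * ‖g‖ :=
    ((fderiv ℝ F w - fderiv ℝ F v).le_opNorm g).trans <| mul_le_mul_of_nonneg_right
      (norm_image_sub_smul_sub_le_of_norm_fderiv_le hs hF' hL) (norm_nonneg g)
  rw [sub_apply, Real.norm_eq_abs, abs_le, hself] at hdev
  nlinarith [sq_nonneg ‖g‖]

lemma antitoneOn_sub_smul_gradient {v : E} {b L : ℝ} (hbL : b * L ≤ 1)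
    (hF : Differentiable ℝ F) (hF' : Differentiable ℝ (fderiv ℝ F))
    (hL : ∀ r ∈ Icc 0 b, ‖fderiv ℝ (fderiv ℝ F) (v - r • gradient F v)‖ ≤ L) :
    AntitoneOn (fun r : ℝ => F (v - r • gradient F v)) (Icc 0 b) := by
  have hderiv : ∀ r : ℝ, HasDerivAt (fun r : ℝ => F (v - r • gradient F v))
      (-fderiv ℝ F (v - r • gradient F v) (gradient F v)) r := fun r =>
    (hF _).hasDerivAt_sub_smul
  refine antitoneOn_of_deriv_nonpos (convex_Icc 0 b)
    (fun r _ => (hderiv r).continuousAt.continuousWithinAt)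
    (fun r _ => (hderiv r).differentiableAt.differentiableWithinAt) fun r hr => ?_
  rw [interior_Icc] at hr
  have hL0 : 0 ≤ L := (hL 0 ⟨le_rfl, hr.1.le.trans hr.2.le⟩).trans' (by positivity)
  rw [(hderiv r).deriv, neg_nonpos]
  exact fderiv_sub_smul_gradient_apply_gradient_nonneg hr.1.le (by nlinarith [hr.2]) hF'
    fun t ht => hL t ⟨ht.1, ht.2.trans hr.2.le⟩

lemma apply_sub_smul_gradient_le {v : E} {η L M : ℝ}
    (hF : Differentiable ℝ F) (hF' : Differentiable ℝ (fderiv ℝ F))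
    (hL : ∀ x, F x ≤ M → ‖fderiv ℝ (fderiv ℝ F) x‖ ≤ L) (hv : F v < M)
    (hη : 0 ≤ η) (hηL : η * L ≤ 1) :
    F (v - η • gradient F v) ≤ F v := by
  have hL0 : 0 ≤ L := (hL v hv.le).trans' (by positivity)
  have hanti : AntitoneOn (fun r : ℝ => F (v - r • gradient F v)) (Icc 0 η) :=
    antitoneOn_Icc_of_antitoneOn_sublevel (hF.continuous.comp (by fun_prop)).continuousOn hv
      (by simp) fun b hb hM =>
        antitoneOn_sub_smul_gradient (by nlinarith) hF hF' fun r hr => hL _ (hM r hr)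
  simpa using hanti ⟨le_rfl, hη⟩ ⟨hη, le_rfl⟩ hη

theorem gd_no_increase_of_selfbounding_general (d : ℕ)
    (F : EuclideanSpace ℝ (Fin d) → ℝ)
    (hF : ContDiff ℝ 2 F) (hFnn : ∀ w, 0 ≤ F w)
    (ρ1 : ℝ → ℝ) (hρ1mono : MonotoneOn ρ1 (Set.Ici 0))
    (hbound : ∀ w, ‖fderiv ℝ (fderiv ℝ F) w‖ ≤ ρ1 (F w))
    (w0 : EuclideanSpace ℝ (Fin d)) (L1w0 : ℝ)
    (hL1w0 : L1w0 = max (max 1 (sbRho0 ρ1 (F w0 + 1)))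
      (max (sbRho0 ρ1 (F w0) * sbRho0 ρ1 (F w0 + 1)) (ρ1 (F w0 + 1))))
    (u0 : EuclideanSpace ℝ (Fin d)) (hu0 : F u0 ≤ F w0)
    (η : ℝ) (hη0 : 0 ≤ η) (hη1 : η ≤ 1 / L1w0)
    (u : ℕ → EuclideanSpace ℝ (Fin d)) (hu0' : u 0 = u0)
    (hrec : ∀ t, u (t + 1) = u t - η • gradient F (u t)) :
    ∀ t : ℕ, F (u t) ≤ F u0 := by
  have hL : ∀ x, F x ≤ F w0 + 1 → ‖fderiv ℝ (fderiv ℝ F) x‖ ≤ ρ1 (F w0 + 1) :=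
    fun x hx => (hbound x).trans (hρ1mono (hFnn x) (mem_Ici.2 (by linarith [hFnn w0])) hx)
  have hηL : η * ρ1 (F w0 + 1) ≤ 1 := by
    have hL0 : 0 ≤ ρ1 (F w0 + 1) := (hL w0 (by linarith)).trans' (by positivity)
    have h1 : 1 ≤ L1w0 := hL1w0 ▸ le_max_of_le_left (le_max_left _ _)
    have hρ : ρ1 (F w0 + 1) ≤ L1w0 := hL1w0 ▸ le_max_of_le_right (le_max_right _ _)
    calc η * ρ1 (F w0 + 1) ≤ 1 / L1w0 * L1w0 := mul_le_mul hη1 hρ hL0 (by positivity)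
      _ = 1 := one_div_mul_cancel (by positivity)
  have hF' : Differentiable ℝ (fderiv ℝ F) :=
    (hF.fderiv_right (m := 1) le_rfl).differentiable one_ne_zero
  intro t
  induction t with
  | zero => rw [hu0']
  | succ n ih =>
    rw [hrec]
    exact (apply_sub_smul_gradient_le (hF.differentiable two_ne_zero) hF' hL (by linarith)
      hη0 hηL).trans ih

/-- Under the second-order self-bounding assumption, gradient descent started in the
`F(w0)`-sublevel set with step size at most `1/L1(w0)` never increases `F`. -/
theorem gd_no_increase_of_selfbounding (d : ℕ) (hd : 1 ≤ d)
    (F : EuclideanSpace ℝ (Fin d) → ℝ)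
    (hF : ContDiff ℝ 2 F) (hFnn : ∀ w, 0 ≤ F w)
    (ρ1 : ℝ → ℝ) (hρ1mono : MonotoneOn ρ1 (Set.Ici 0))
    (hρ1cont : ContinuousOn ρ1 (Set.Ici 0))
    (hρ1pos : ∀ x ∈ Set.Ici (0 : ℝ), 0 < ρ1 x)
    (hbound : ∀ w, ‖fderiv ℝ (fderiv ℝ F) w‖ ≤ ρ1 (F w))
    (w0 : EuclideanSpace ℝ (Fin d)) (L1w0 : ℝ)
    (hL1w0 : L1w0 = max (max 1 (sbRho0 ρ1 (F w0 + 1)))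
      (max (sbRho0 ρ1 (F w0) * sbRho0 ρ1 (F w0 + 1)) (ρ1 (F w0 + 1))))
    (u0 : EuclideanSpace ℝ (Fin d)) (hu0 : F u0 ≤ F w0)
    (η : ℝ) (hη0 : 0 ≤ η) (hη1 : η ≤ 1 / L1w0)
    (u : ℕ → EuclideanSpace ℝ (Fin d)) (hu0' : u 0 = u0)
    (hrec : ∀ t, u (t + 1) = u t - η • gradient F (u t)) :
    ∀ t : ℕ, F (u t) ≤ F u0 :=
  gd_no_increase_of_selfbounding_general d F hF hFnn ρ1 hρ1mono hbound w0 L1w0 hL1w0 u0 hu0 η hη0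
    hη1 u hu0' hrec
end

section
/- Define F : ℝ → ℝ by F(x) = 1 − log(cos(1 + x)), whose second derivative on [0, π/2 − 1) is F″(x) = tan(1 + x)² + 1. For every function ℓ : ℝ → ℝ with ℓ(y)/y² → 0 as y → ∞, there exists x with 0 ≤ x < π/2 − 1 such that F″(x) > ℓ(tan(1 + x)); that is, F does not satisfy the condition ‖F″(x)‖ ≤ ℓ(F′(x)) on [0, π/2 − 1) for any sub-quadratic ℓ. -/
open Filter Real

/-- For `F(x) = 1 − log(cos(1+x))` with `F″(x) = tan(1+x)² + 1` on `[0, π/2 − 1)`: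
for every sub-quadratic `ℓ`, there is a point `x` in `[0, π/2 − 1)` where
`F″(x) > ℓ(F′(x)) = ℓ(tan(1+x))`. -/
theorem log_sec_not_subquadratic_smooth (ℓ : ℝ → ℝ)
    (hℓ : Filter.Tendsto (fun y => ℓ y / y ^ 2) Filter.atTop (nhds 0)) :
    ∃ x : ℝ, 0 ≤ x ∧ x < Real.pi / 2 - 1 ∧
      ℓ (Real.tan (1 + x)) < Real.tan (1 + x) ^ 2 + 1 := by
  -- eventually ℓ y < y^2 + 1 for large y
  have h1 : ∀ᶠ y in atTop, ℓ y < y ^ 2 + 1 := by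
    have := hℓ.eventually (eventually_lt_nhds (by norm_num : (0:ℝ) < 1))
    filter_upwards [this, eventually_gt_atTop 0] with y hy hy0
    have hy2 : (0:ℝ) < y ^ 2 := by positivity
    have : ℓ y < y ^ 2 := by
      have := (div_lt_one hy2).mp hy
      linarith
    linarith
  -- tan (1 + x) → ∞ as x → (π/2 - 1)⁻
  have htend : Tendsto (fun x : ℝ => Real.tan (1 + x)) (nhdsWithin (π/2 - 1) (Set.Iio (π/2 - 1))) atTop := by
    apply Real.tendsto_tan_pi_div_two.comp
    have hcont : Tendsto (fun x : ℝ => 1 + x) (nhds (π/2 - 1)) (nhds (π/2)) := by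
      have : Continuous (fun x : ℝ => 1 + x) := continuous_const.add continuous_id
      simpa using this.tendsto (π/2 - 1)
    apply tendsto_nhdsWithin_of_tendsto_nhds_of_eventually_within _
      (hcont.mono_left nhdsWithin_le_nhds)
    filter_upwards [self_mem_nhdsWithin] with x hx
    simp only [Set.mem_Iio] at hx ⊢
    linarith
  have h2 : ∀ᶠ x in nhdsWithin (π/2 - 1) (Set.Iio (π/2 - 1)),
      ℓ (Real.tan (1 + x)) < Real.tan (1 + x) ^ 2 + 1 := htend.eventually h1
  have hpos : (0:ℝ) < π/2 - 1 := by
    have := Real.pi_gt_three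
    linarith
  have h3 : Set.Ioo (0:ℝ) (π/2 - 1) ∈ nhdsWithin (π/2 - 1) (Set.Iio (π/2 - 1)) := by
    rw [← Set.Iio_inter_Ioi]
    exact inter_mem_nhdsWithin _ (Ioi_mem_nhds hpos)
  have hne : (nhdsWithin (π/2 - 1) (Set.Iio (π/2 - 1))).NeBot := by
    exact nhdsLT_neBot _
  obtain ⟨x, hx1, hx2⟩ := (h2.and (eventually_of_mem h3 fun x hx => hx)).exists
  exact ⟨x, le_of_lt hx2.1, hx2.2, hx1⟩
end

section
/- Fix d ≥ 1 and a unit vector w⋆ ∈ E = EuclideanSpace ℝ (Fin d). Let F(w) = ‖w‖² − ⟨w, w⋆⟩² + (3/4)·(‖w‖² − 1)², let g(w) = (3‖w‖² − 1)·w − 2·⟨w, w⋆⟩·w⋆ (the gradient of F at w), and let Q_w(u) = (3‖w‖² − 1)·‖u‖² − 2·⟨u, w⋆⟩² + 6·⟨u, w⟩² (the Hessian quadratic form of F at w). Then for every δ with 0 < δ ≤ (1/20)⁴ and every w ∈ E with ‖g(w)‖ ≤ δ, either F(w) ≤ δ²/2, or there exists a unit vector u ∈ E with Q_w(u) ≤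 −9/10. -/
open scoped RealInnerProductSpace

set_option maxHeartbeats 1600000 in
/-- Phase retrieval population loss is strict saddle: any `δ`-approximate first-order
stationary point `w` (with `δ ≤ (1/20)⁴`) either has small loss `F(w) ≤ δ²/2`, or the
Hessian quadratic form has a direction of curvature at most `−9/10`. -/
theorem phase_retrieval_strict_saddle (d : ℕ) (hd : 1 ≤ d)
    (ws : EuclideanSpace ℝ (Fin d)) (hws : ‖ws‖ = 1)
    (δ : ℝ) (hδ0 : 0 < δ) (hδ : δ ≤ (1 / 20 : ℝ) ^ 4)
    (w : EuclideanSpace ℝ (Fin d))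
    (hg : ‖(3 * ‖w‖ ^ 2 - 1) • w - (2 * ⟪w, ws⟫) • ws‖ ≤ δ) :
    ‖w‖ ^ 2 - ⟪w, ws⟫ ^ 2 + 3 / 4 * (‖w‖ ^ 2 - 1) ^ 2 ≤ δ ^ 2 / 2 ∨
    ∃ u : EuclideanSpace ℝ (Fin d), ‖u‖ = 1 ∧
      (3 * ‖w‖ ^ 2 - 1) * ‖u‖ ^ 2 - 2 * ⟪u, ws⟫ ^ 2 + 6 * ⟪u, w⟫ ^ 2 ≤ -(9 / 10) := by
  set t := ‖w‖ ^ 2 with ht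
  set s := ⟪w, ws⟫ with hs
  have ht0 : (0:ℝ) ≤ t := by positivity
  have hδ' : δ ≤ 1/160000 := by norm_num at hδ; linarith
  have hδsq : δ^2 ≤ 1/25600000000 := by nlinarith
  have hst : s^2 ≤ t := by
    have h := abs_real_inner_le_norm w ws
    rw [hws, mul_one] at h
    nlinarith [abs_nonneg (⟪w, ws⟫), sq_abs (⟪w, ws⟫)]
  have hgsq : ‖(3 * t - 1) • w - (2 * s) • ws‖ ^ 2 ≤ δ ^ 2 := by
    have hn : (0:ℝ) ≤ ‖(3 * t - 1) • w - (2 * s) • ws‖ := norm_nonneg _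
    nlinarith [hg]
  have hexp : ‖(3 * t - 1) • w - (2 * s) • ws‖ ^ 2
      = (3*t-1)^2 * t - 4*s^2*(3*t-1) + 4*s^2 := by
    have h1 : ‖(3 * t - 1) • w - (2 * s) • ws‖ ^ 2
        = ⟪(3 * t - 1) • w - (2 * s) • ws, (3 * t - 1) • w - (2 * s) • ws⟫ :=
      (real_inner_self_eq_norm_sq _).symm
    rw [h1]
    simp only [inner_sub_left, inner_sub_right, real_inner_smul_left, real_inner_smul_right]
    have h2 : ⟪w, w⟫ = t := real_inner_self_eq_norm_sq w
    have h3 : ⟪ws, ws⟫ = (1:ℝ) := by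
      rw [real_inner_self_eq_norm_sq, hws]; norm_num
    have h4 : ⟪ws, w⟫ = s := (real_inner_comm ws w).symm
    rw [h2, h3, h4, ← hs]
    ring
  have key : 9*s^2*(t-1)^2 + (3*t-1)^2*(t - s^2) ≤ δ^2 := by
    rw [hexp] at hgsq; nlinarith [hgsq]
  rcases le_or_gt (s^2) (8/100) with hc | hc
  · right
    refine ⟨ws, hws, ?_⟩
    have h3 : ⟪ws, ws⟫ = (1:ℝ) := by
      rw [real_inner_self_eq_norm_sq, hws]; norm_num
    have h4 : ⟪ws, w⟫ = s := (real_inner_comm ws w).symm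
    rw [hws, h3, h4]
    nlinarith [key, hst, sq_nonneg s, sq_nonneg (t-1), sq_nonneg (3*t-1),
      mul_nonneg (sq_nonneg s) (sq_nonneg (t-1)),
      mul_nonneg (sq_nonneg (3*t-1)) (sub_nonneg.2 hst)]
  · left
    have h1 : (t-1)^2 ≤ 25/18*δ^2 := by
      nlinarith [key, mul_nonneg (sq_nonneg (3*t-1)) (sub_nonneg.2 hst),
        mul_nonneg (le_of_lt (by linarith : (0:ℝ) < s^2 - 8/100)) (sq_nonneg (t-1))]
    have h2 : t ≥ 99/100 := by nlinarith [h1, hδsq]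
    have h2' : (3*t-1)^2 ≥ 388/100 := by nlinarith [h2]
    have h3 : t - s^2 ≤ 26/100*δ^2 := by
      nlinarith [key, mul_nonneg (by linarith : (0:ℝ) ≤ (3*t-1)^2 - 388/100)
        (sub_nonneg.2 hst), mul_nonneg (mul_nonneg (by norm_num : (0:ℝ) ≤ 9) (sq_nonneg s)) (sq_nonneg (t-1))]
    have h4 : s^2 ≥ 98/100 := by nlinarith [h3, h2, hδsq]
    have h5 : (t-1)^2 ≤ 114/1000*δ^2 := by
      nlinarith [key, mul_nonneg (by linarith : (0:ℝ) ≤ s^2 - 98/100) (sq_nonneg (t-1)),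
        mul_nonneg (sq_nonneg (3*t-1)) (sub_nonneg.2 hst)]
    linarith [h3, h5]
end

section
/- Fix d ≥ 1 and a symmetric positive-definite matrix M ∈ ℝ^{d×d} with eigenvalues λ1 ≥ λ2 ≥ … ≥ λd > 0 (listed with multiplicity). For w ∈ ℝ^d let g(w) = (w wᵀ − M)·w (the gradient of F(w) = (1/2)·‖w wᵀ − M‖_F²) and let H(w) = ‖w‖²·I + 2·w wᵀ − M (its Hessian). Suppose 0 < ε < min{1, (λ1 − λ2)²/16, (3/8)·(λ1 − λ2)^{5/2}}, ‖g(w)‖ ≤ ε, and uᵀ H(w) u ≥ −√ε for every unit vector u ∈ ℝ^d. Then |‖w‖² − λ1| < √ε. -/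
open scoped Matrix
open Finset Matrix

/-!
Work in the eigenbasis of `M`: with `y = Uᵀ w` and `s = ‖w‖² = ‖y‖²`, the gradient has coordinates
`(s - λᵢ) yᵢ`, and the Hessian form along the top eigenvector is `s + 2 y₁² - λ₁`. Put `r = √ε`.
If `s ≥ λ₁ + r`, every factor `|s - λᵢ|` is at least `r`, so the gradient bound gives `s ≤ r²`,
which is absurd. If `s ≤ λ₁ - r`, the gradient bound forces `y₁² ≤ r²`, so the Hessian condition
gives `s ≥ λ₁ - 3r`; by the gap `λ₁ - λ₂ > 4r` every other factor `s - λᵢ` exceeds `r`. Hence the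
mass off the top coordinate, and then `y₁²` itself, are `O(r²)`, and the Hessian inequality
`λ₁ ≤ s + 2 y₁² + r` fails.
-/

theorem sum_sq_eq_dotProduct_self {n : Type*} [Fintype n] (v : n → ℝ) :
    ∑ i, v i ^ 2 = v ⬝ᵥ v := by
  simp [dotProduct, sq]

theorem mul_sum_sq_le_sum_mul_sq {ι : Type*} (S : Finset ι) {c : ℝ} (a y : ι → ℝ)
    (h : ∀ i ∈ S, c ≤ a i ^ 2) : c * ∑ i ∈ S, y i ^ 2 ≤ ∑ i ∈ S, (a i * y i) ^ 2 := by
  rw [mul_sum]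
  exact sum_le_sum fun i hi => by
    rw [mul_pow]; exact mul_le_mul_of_nonneg_right (h i hi) (sq_nonneg _)

section EigenCoordinates

variable {ι : Type*} [Fintype ι] {lam y : ι → ℝ} {s r : ℝ}

theorem mul_sum_sq_le_of_gradient_bound (hgrad : ∑ i, ((s - lam i) * y i) ^ 2 ≤ r ^ 4)
    (S : Finset ι) {c : ℝ} (h : ∀ i ∈ S, c ≤ (s - lam i) ^ 2) :
    c * ∑ i ∈ S, y i ^ 2 ≤ r ^ 4 :=
  calc c * ∑ i ∈ S, y i ^ 2 ≤ ∑ i ∈ S, ((s - lam i) * y i) ^ 2 :=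
        mul_sum_sq_le_sum_mul_sq S _ y h
    _ ≤ ∑ i, ((s - lam i) * y i) ^ 2 := sum_le_univ_sum_of_nonneg fun _ => sq_nonneg _
    _ ≤ r ^ 4 := hgrad

theorem lt_add_of_gradient_bound (hs : ∑ i, y i ^ 2 = s)
    (hgrad : ∑ i, ((s - lam i) * y i) ^ 2 ≤ r ^ 4) (hr : 0 < r) (hr1 : r ≤ 1)
    {Λ : ℝ} (hΛ : 0 < Λ) (hle : ∀ i, lam i ≤ Λ) : s < Λ + r := by
  by_contra! h
  have hbound : r ^ 2 * s ≤ r ^ 4 := by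
    rw [← hs]
    exact mul_sum_sq_le_of_gradient_bound hgrad univ fun i _ =>
      pow_le_pow_left₀ hr.le (by linarith [hle i]) 2
  have hs_le : s ≤ r ^ 2 := le_of_mul_le_mul_left (hbound.trans_eq (by ring)) (by positivity)
  nlinarith

theorem sub_lt_of_gradient_hessian_bound (hs : ∑ i, y i ^ 2 = s)
    (hgrad : ∑ i, ((s - lam i) * y i) ^ 2 ≤ r ^ 4) (hr : 0 < r) (hr1 : r ≤ 1)
    {i₀ : ι} {μ : ℝ} (hμ : 0 < μ) (hsecond : ∀ i ≠ i₀, lam i ≤ μ)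
    (hgap : μ + 4 * r < lam i₀) (hhess : -r ≤ s + 2 * y i₀ ^ 2 - lam i₀) :
    lam i₀ - r < s := by
  classical
  by_contra! h
  have hbound_top {t : ℝ} (ht : 0 ≤ t) (hts : t ≤ lam i₀ - s) :
      t ^ 2 * y i₀ ^ 2 ≤ r ^ 4 := by
    have hsq : t ^ 2 ≤ (s - lam i₀) ^ 2 := by
      rw [← neg_sub, neg_sq]; exact pow_le_pow_left₀ ht hts 2
    simpa using mul_sum_sq_le_of_gradient_bound hgrad {i₀} (by simpa using hsq)
  have htop : y i₀ ^ 2 ≤ r ^ 2 :=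
    le_of_mul_le_mul_left ((hbound_top hr.le (by linarith)).trans_eq (by ring))
      (by positivity)
  have hrest : s - y i₀ ^ 2 ≤ r ^ 2 := by
    have hsplit : ∑ i ∈ univ.erase i₀, y i ^ 2 = s - y i₀ ^ 2 := by
      rw [← hs, ← sum_erase_add _ _ (mem_univ i₀), add_sub_cancel_right]
    have := mul_sum_sq_le_of_gradient_bound hgrad (univ.erase i₀) fun i hi =>
      pow_le_pow_left₀ hr.le (by nlinarith [hsecond i (ne_of_mem_erase hi)]) 2
    rw [hsplit] at this
    exact le_of_mul_le_mul_left (this.trans_eq (by ring)) (by positivity)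
  have htop' : 4 * y i₀ ^ 2 ≤ r ^ 2 := by
    have := hbound_top (t := 2 * r) (by positivity) (by nlinarith)
    nlinarith
  nlinarith

theorem abs_sub_lt_of_gradient_hessian_bound (hs : ∑ i, y i ^ 2 = s)
    (hgrad : ∑ i, ((s - lam i) * y i) ^ 2 ≤ r ^ 4) (hr : 0 < r) (hr1 : r ≤ 1)
    {i₀ : ι} {μ : ℝ} (hμ : 0 < μ) (hsecond : ∀ i ≠ i₀, lam i ≤ μ)
    (hgap : μ + 4 * r < lam i₀) (hhess : -r ≤ s + 2 * y i₀ ^ 2 - lam i₀) :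
    |s - lam i₀| < r := by
  have hle (i : ι) : lam i ≤ lam i₀ := by
    rcases eq_or_ne i i₀ with rfl | hi
    · rfl
    · linarith [hsecond i hi]
  rw [abs_sub_lt_iff]
  constructor
  · linarith [lt_add_of_gradient_bound hs hgrad hr hr1 (by linarith) hle]
  · linarith [sub_lt_of_gradient_hessian_bound hs hgrad hr hr1 hμ hsecond hgap hhess]

end EigenCoordinates

section SpectralDecomposition

variable {n : Type*} [Fintype n] [DecidableEq n] {U : Matrix n n ℝ}

theorem dotProduct_transpose_mulVec_self (hU : Uᵀ * U = 1) (v : n → ℝ) :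
    (Uᵀ *ᵥ v) ⬝ᵥ (Uᵀ *ᵥ v) = v ⬝ᵥ v := by
  rw [dotProduct_mulVec, vecMul_transpose, mulVec_mulVec, mul_eq_one_comm.mp hU, one_mulVec]

theorem transpose_mulVec_pca_gradient (hU : Uᵀ * U = 1) (lam w : n → ℝ) :
    Uᵀ *ᵥ ((vecMulVec w w - U * diagonal lam * Uᵀ) *ᵥ w)
      = fun i => (w ⬝ᵥ w - lam i) * (Uᵀ *ᵥ w) i := by
  have hdiag : Uᵀ * (U * diagonal lam * Uᵀ) = diagonal lam * Uᵀ := by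
    rw [← Matrix.mul_assoc, ← Matrix.mul_assoc, hU, Matrix.one_mul]
  rw [sub_mulVec, vecMulVec_mulVec, mulVec_sub, mulVec_smul, mulVec_mulVec, hdiag,
    ← mulVec_mulVec]
  ext i
  rw [Pi.sub_apply, mulVec_diagonal, Pi.smul_apply, op_smul_eq_smul, smul_eq_mul]
  ring

theorem dotProduct_transpose_row_self (hU : Uᵀ * U = 1) (i : n) : Uᵀ i ⬝ᵥ Uᵀ i = 1 := by
  simpa [Matrix.mul_apply, dotProduct] using congrFun (congrFun hU i) i

theorem mulVec_transpose_row (hU : Uᵀ * U = 1) (lam : n → ℝ) (i : n) :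
    (U * diagonal lam * Uᵀ) *ᵥ Uᵀ i = lam i • Uᵀ i := by
  have : Uᵀ *ᵥ Uᵀ i = Pi.single i 1 := by
    ext j
    change (Uᵀ * U) j i = _
    rw [hU, one_apply, Pi.single_apply]
  ext j
  rw [← mulVec_mulVec, ← mulVec_mulVec, this, mulVec_single]
  simp [mul_comm]

theorem pca_hessian_form_of_eigenvector (M : Matrix n n ℝ) (c : ℝ) (w u : n → ℝ) {μ : ℝ}
    (hu : u ⬝ᵥ u = 1) (hMu : M *ᵥ u = μ • u) :
    u ⬝ᵥ ((c • (1 : Matrix n n ℝ) + (2 : ℝ) • vecMulVec w w - M) *ᵥ u)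
      = c + 2 * (u ⬝ᵥ w) ^ 2 - μ := by
  rw [sub_mulVec, add_mulVec, smul_mulVec, one_mulVec, smul_mulVec, vecMulVec_mulVec, hMu,
    dotProduct_sub, dotProduct_add, dotProduct_smul, dotProduct_smul, dotProduct_smul,
    dotProduct_smul, hu, dotProduct_comm w u]
  simp only [op_smul_eq_smul, smul_eq_mul]
  ring

end SpectralDecomposition

/-- Matrix PCA is strict saddle: if `M` is symmetric positive definite with eigenvalues
`λ1 ≥ λ2 ≥ … ≥ λd > 0`, and `w` is an `ε`-second-order stationary point of
`F(w) = (1/2)‖w wᵀ − M‖_F²` (gradient `g(w) = (w wᵀ − M) w`, Hessian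
`H(w) = ‖w‖² I + 2 w wᵀ − M`) for small enough `ε`, then `|‖w‖² − λ1| < √ε`. -/
theorem matrix_pca_strict_saddle (d : ℕ) (hd : 2 ≤ d)
    (M : Matrix (Fin d) (Fin d) ℝ)
    (lam : Fin d → ℝ) (hlam_anti : Antitone lam) (hlam_pos : ∀ i, 0 < lam i)
    (hdiag : ∃ U : Matrix (Fin d) (Fin d) ℝ, Uᵀ * U = 1 ∧
      M = U * Matrix.diagonal lam * Uᵀ)
    (ε : ℝ) (hε0 : 0 < ε)
    (hε : ε < min 1 (min ((lam ⟨0, by omega⟩ - lam ⟨1, by omega⟩) ^ 2 / 16)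
      (3 / 8 * (lam ⟨0, by omega⟩ - lam ⟨1, by omega⟩) ^ ((5 : ℝ) / 2))))
    (w : Fin d → ℝ)
    (hg : Real.sqrt (∑ i, ((Matrix.vecMulVec w w - M).mulVec w i) ^ 2) ≤ ε)
    (hH : ∀ u : Fin d → ℝ, (∑ i, u i ^ 2) = 1 →
      -Real.sqrt ε ≤ dotProduct u
        (((∑ i, w i ^ 2) • (1 : Matrix (Fin d) (Fin d) ℝ)
          + (2 : ℝ) • Matrix.vecMulVec w w - M).mulVec u)) :
    |(∑ i, w i ^ 2) - lam ⟨0, by omega⟩| < Real.sqrt ε := by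
  obtain ⟨U, hU, rfl⟩ := hdiag
  set i₀ : Fin d := ⟨0, by omega⟩
  set i₁ : Fin d := ⟨1, by omega⟩
  set r := Real.sqrt ε
  have hr : 0 < r := Real.sqrt_pos.mpr hε0
  have hr2 : r ^ 2 = ε := Real.sq_sqrt hε0.le
  have hr1 : r ≤ 1 := Real.sqrt_le_one.mpr (lt_of_lt_of_le hε (min_le_left _ _)).le
  have hgap : lam i₁ + 4 * r < lam i₀ := by
    have hδ : 0 ≤ lam i₀ - lam i₁ := sub_nonneg.mpr (hlam_anti (Fin.le_def.mpr (Nat.zero_le _)))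
    have h16 : ε < (lam i₀ - lam i₁) ^ 2 / 16 := lt_of_lt_of_le hε
      ((min_le_right _ _).trans (min_le_left _ _))
    have : (4 * r) ^ 2 < (lam i₀ - lam i₁) ^ 2 := by
      rw [mul_pow, hr2]; linarith
    linarith [lt_of_pow_lt_pow_left₀ 2 hδ this]
  have hsecond (i : Fin d) (hi : i ≠ i₀) : lam i ≤ lam i₁ :=
    hlam_anti (Fin.le_def.mpr (Nat.one_le_iff_ne_zero.mpr fun h => hi (Fin.ext h)))
  have hgrad : ∑ i, ((w ⬝ᵥ w - lam i) * (Uᵀ *ᵥ w) i) ^ 2 ≤ r ^ 4 := by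
    rw [sum_sq_eq_dotProduct_self, ← transpose_mulVec_pca_gradient hU,
      dotProduct_transpose_mulVec_self hU, ← sum_sq_eq_dotProduct_self,
      show r ^ 4 = ε ^ 2 by rw [← hr2]; ring]
    exact (Real.sqrt_le_left hε0.le).mp hg
  have hhess := hH (Uᵀ i₀) (by rw [sum_sq_eq_dotProduct_self, dotProduct_transpose_row_self hU])
  rw [sum_sq_eq_dotProduct_self, pca_hessian_form_of_eigenvector _ _ _ _
    (dotProduct_transpose_row_self hU i₀) (mulVec_transpose_row hU lam i₀)] at hhess
  rw [sum_sq_eq_dotProduct_self]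
  exact abs_sub_lt_of_gradient_hessian_bound
    (by rw [sum_sq_eq_dotProduct_self, dotProduct_transpose_mulVec_self hU]) hgrad hr hr1
    (hlam_pos i₁) hsecond hgap hhess
end
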